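/- A HyperLTL formula ψ is satisfiable by some nonempty trace set of cardinality at most m if and only if ψ is satisfiable by a nonempty set of at most m ultimately periodic traces. -/

import Mathlib

/-- A trace over atomic propositions (modeled as naturals). -/
abbrev Trace : Type := ℕ → Set ℕ

/-- HyperLTL formulas: atomic propositions `a` and trace variables `π` are naturals. -/
inductive HLTL : Type
  | tt    : HLTL
  | atom  : ℕ → ℕ → HLTL            -- `atom a π` is `a_π`
  | neg   : HLTL → HLTL
  | or    : HLTL → HLTL → HLTL
  | next  : HLTL → HLTL
  | until_ : HLTL → HLTL → HLTL
  | ex    : ℕ → HLTL → HLTL          -- `∃ π. ψ`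
  | all   : ℕ → HLTL → HLTL          -- `∀ π. ψ`

namespace HLTL

/-- Shift every trace in the range of an assignment by `i` steps. -/
def shift (A : ℕ → Trace) (i : ℕ) : ℕ → Trace := fun π n => A π (n + i)

/-- Semantics of HyperLTL: `sat T ψ A` is `A ⊨_T ψ`. -/
def sat (T : Set Trace) : HLTL → (ℕ → Trace) → Prop
  | .tt, _ => True
  | .atom a π, A => a ∈ A π 0
  | .neg φ, A => ¬ sat T φ A
  | .or φ ψ, A => sat T φ A ∨ sat T ψ A
  | .next φ, A => sat T φ (shift A 1)
  | .until_ φ ψ, A => ∃ i, sat T ψ (shift A i) ∧ ∀ j < i, sat T φ (shift A j)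
  | .ex π φ, A => ∃ t ∈ T, sat T φ (Function.update A π t)
  | .all π φ, A => ∀ t ∈ T, sat T φ (Function.update A π t)

/-- Quantifier-free formulas. -/
def quantFree : HLTL → Bool
  | .tt => true
  | .atom _ _ => true
  | .neg φ => quantFree φ
  | .or φ ψ => quantFree φ && quantFree ψ
  | .next φ => quantFree φ
  | .until_ φ ψ => quantFree φ && quantFree ψ
  | .ex _ _ => false
  | .all _ _ => false

/-- All trace quantifiers occur in a prefix. -/
def prenex : HLTL → Bool
  | .ex _ φ => prenex φ
  | .all _ φ => prenex φ
  | φ => quantFree φ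

/-- Free trace variables of a formula. -/
def free : HLTL → Finset ℕ
  | .tt => ∅
  | .atom _ π => {π}
  | .neg φ => free φ
  | .or φ ψ => free φ ∪ free ψ
  | .next φ => free φ
  | .until_ φ ψ => free φ ∪ free ψ
  | .ex π φ => (free φ).erase π
  | .all π φ => (free φ).erase π

/-- A HyperLTL formula (as in the grammar): a closed sentence with all
trace quantifiers in a prefix. -/
def Sentence (ψ : HLTL) : Prop := prenex ψ = true ∧ free ψ = ∅

/-- `T` satisfies `ψ`: `T` is nonempty and `∅ ⊨_T ψ` (for closed `ψ` the
trace assignment is irrelevant, so we quantify over all assignments). -/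
def SatBy (T : Set Trace) (ψ : HLTL) : Prop :=
  T.Nonempty ∧ ∀ A : ℕ → Trace, sat T ψ A

/-- HyperLTL satisfiability. -/
def Satisfiable (ψ : HLTL) : Prop := ∃ T : Set Trace, SatBy T ψ

/-- A computable injective Gödel encoding of HyperLTL formulas. -/
def encode : HLTL → ℕ
  | .tt => 0
  | .atom a π => 8 * Nat.pair a π + 1
  | .neg φ => 8 * encode φ + 2
  | .or φ ψ => 8 * Nat.pair (encode φ) (encode ψ) + 3
  | .next φ => 8 * encode φ + 4
  | .until_ φ ψ => 8 * Nat.pair (encode φ) (encode ψ) + 5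
  | .ex π φ => 8 * Nat.pair π (encode φ) + 6
  | .all π φ => 8 * Nat.pair π (encode φ) + 7

end HLTL

/-- The set of Gödel codes of satisfiable (closed, prenex) HyperLTL formulas. -/
def HyperLTLSatCode (n : ℕ) : Prop :=
  ∃ ψ : HLTL, HLTL.Sentence ψ ∧ HLTL.encode ψ = n ∧ HLTL.Satisfiable ψ

/-- A predicate on ℕ is computably enumerable iff it is the domain of a
partial computable function. -/
def REpred (p : ℕ → Prop) : Prop :=
  ∃ f : ℕ →. ℕ, Partrec f ∧ ∀ n, p n ↔ (f n).Dom

/-- A trace is ultimately periodic iff there are `s ≥ 0` and `p ≥ 1` with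
`t (i + p) = t i` for all `i ≥ s`. -/
def UltimatelyPeriodic (t : Trace) : Prop :=
  ∃ s : ℕ, ∃ p : ℕ, 1 ≤ p ∧ ∀ i, s ≤ i → t (i + p) = t i

/-!
Let a finite `T` satisfy `ψ`. Since `T` and the set of subformulas are finite, the truth table of
all subformulas under all relevant assignments takes finitely many values along the positions, so
some value recurs at `i` and at a `j` lying beyond the witnesses of all untils pending at `i`.
Replacing each trace `t` by `t ∘ lasso i j`, which runs up to `j` and then loops on `[i, j)`, keeps
every quantifier-free subformula true exactly where it was true at the corresponding position, so
the matrix of `ψ` transfers to the corresponding assignments, and then `ψ` transfers through its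
quantifier prefix. The new set is no larger than `T` and consists of ultimately periodic traces.
-/

open Filter Function

/-- The LTL formula `P U Q` at position `p`. -/
def UntilAt (P Q : ℕ → Prop) (p : ℕ) : Prop := ∃ d, Q (p + d) ∧ ∀ e < d, P (p + e)

lemma untilAt_of_succ {P Q : ℕ → Prop} {p : ℕ} (hP : P p) (h : UntilAt P Q (p + 1)) :
    UntilAt P Q p := by
  obtain ⟨d, hQ, hP'⟩ := h
  refine ⟨d + 1, by rwa [← add_assoc, add_right_comm], fun e he => ?_⟩
  cases e with
  | zero => exact hP
  | succ e => simpa [add_right_comm, add_assoc] using hP' e (by omega)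

/-- The positions `0, 1, …, j - 1`, followed by the loop `i, …, j - 1` repeated forever. -/
def lasso (i j n : ℕ) : ℕ := if n < i then n else i + (n - i) % (j - i)

section Lasso

variable {i j n : ℕ}

lemma lasso_of_le (h : i ≤ n) : lasso i j n = i + (n - i) % (j - i) := if_neg (by omega)

lemma lasso_zero : lasso i j 0 = 0 := by
  unfold lasso; split_ifs <;> simp_all

lemma lasso_lt (hij : i < j) (n : ℕ) : lasso i j n < j := by
  unfold lasso
  split_ifs
  · omega
  · have := Nat.mod_lt (n - i) (show 0 < j - i by omega)
    omega

lemma lasso_add_of_lt (hij : i < j) {e : ℕ} (h : lasso i j n + e < j) :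
    lasso i j (n + e) = lasso i j n + e := by
  rcases lt_or_ge n i with hn | hn
  · have hn' : lasso i j n = n := if_pos hn
    rw [hn'] at h ⊢
    rcases lt_or_ge (n + e) i with hne | hne
    · exact if_pos hne
    · rw [lasso_of_le hne, Nat.mod_eq_of_lt (by omega)]
      omega
  · rw [lasso_of_le hn] at h ⊢
    rw [lasso_of_le (by omega), show n + e - i = n - i + e by omega, ← Nat.mod_add_mod,
      Nat.mod_eq_of_lt (by omega), add_assoc]

lemma lasso_succ_of_eq (hij : i < j) (h : lasso i j n + 1 = j) : lasso i j (n + 1) = i := by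
  have hn : i ≤ n := by
    by_contra! hn
    rw [lasso, if_pos hn] at h
    omega
  rw [lasso_of_le hn] at h
  rw [lasso_of_le (by omega), show n + 1 - i = n - i + 1 by omega, ← Nat.mod_add_mod,
    show (n - i) % (j - i) + 1 = j - i by omega, Nat.mod_self, add_zero]

lemma lasso_succ_iff (hij : i < j) (P : ℕ → Prop) (hP : P i ↔ P j) (n : ℕ) :
    P (lasso i j (n + 1)) ↔ P (lasso i j n + 1) := by
  rcases lt_or_ge (lasso i j n + 1) j with h | h
  · rw [lasso_add_of_lt hij h]
  · have h : lasso i j n + 1 = j := by have := lasso_lt hij n; omega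
    rw [lasso_succ_of_eq hij h, h, hP]

lemma lasso_add_sub_add (hij : i < j) {e : ℕ} (he : i + e < j) :
    lasso i j (n + (j - lasso i j n) + e) = i + e := by
  have hlt := lasso_lt hij n
  have hlast : lasso i j (n + (j - lasso i j n - 1)) = j - 1 := by
    rw [lasso_add_of_lt hij (by omega)]
    omega
  have hloop : lasso i j (n + (j - lasso i j n)) = i := by
    rw [show n + (j - lasso i j n) = n + (j - lasso i j n - 1) + 1 by omega]
    exact lasso_succ_of_eq hij (by omega)
  rw [lasso_add_of_lt hij (by omega), hloop]

lemma lasso_add_period (hn : i ≤ n) : lasso i j (n + (j - i)) = lasso i j n := by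
  rw [lasso_of_le hn, lasso_of_le (by omega), show n + (j - i) - i = n - i + (j - i) by omega,
    Nat.add_mod_right]

lemma ultimatelyPeriodic_comp_lasso (hij : i < j) (t : Trace) :
    UltimatelyPeriodic (t ∘ lasso i j) :=
  ⟨i, j - i, by omega, fun _ hn => congrArg t (lasso_add_period hn)⟩

lemma untilAt_of_untilAt_comp_lasso (hij : i < j) {P Q : ℕ → Prop}
    (hU : UntilAt P Q i ↔ UntilAt P Q j) (h : UntilAt (P ∘ lasso i j) (Q ∘ lasso i j) n) :
    UntilAt P Q (lasso i j n) := by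
  obtain ⟨d, hQ, hP⟩ := h
  have key : ∀ k ≤ d, UntilAt P Q (lasso i j (n + k)) := fun k hk =>
    Nat.decreasingInduction (motive := fun k _ => UntilAt P Q (lasso i j (n + k)))
      (fun k hk h => untilAt_of_succ (hP k hk) ((lasso_succ_iff hij _ hU (n + k)).1 h))
      ⟨0, hQ, fun _ h => absurd h (Nat.not_lt_zero _)⟩ hk
  exact key 0 (Nat.zero_le d)

/-- If the witness of `P U Q` at `lasso i j n` lies beyond `j`, then `P U Q` holds at `j`, hence
at `i`, and the lasso follows the witness found between `i` and `j` instead. -/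
lemma untilAt_comp_lasso_of_untilAt (hij : i < j) {P Q : ℕ → Prop}
    (hU : UntilAt P Q i ↔ UntilAt P Q j)
    (hfulfil : UntilAt P Q i → ∃ d, i + d < j ∧ Q (i + d) ∧ ∀ e < d, P (i + e))
    (h : UntilAt P Q (lasso i j n)) : UntilAt (P ∘ lasso i j) (Q ∘ lasso i j) n := by
  have hstem : ∀ e, lasso i j n + e < j → lasso i j (n + e) = lasso i j n + e :=
    fun _ he => lasso_add_of_lt hij he
  have hloop : ∀ e, i + e < j → lasso i j (n + (j - lasso i j n) + e) = i + e :=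
    fun _ he => lasso_add_sub_add hij he
  have hp := lasso_lt hij n
  generalize lasso i j n = p at *
  obtain ⟨d, hQ, hP⟩ := h
  rcases lt_or_ge (p + d) j with hd | hd
  · exact ⟨d, by simpa [hstem d hd] using hQ,
      fun e he => by simpa [hstem e (by omega)] using hP e he⟩
  have hUj : UntilAt P Q j :=
    ⟨d - (j - p), by rwa [show j + (d - (j - p)) = p + d by omega],
      fun e he => by simpa [show j + e = p + (j - p + e) by omega] using hP _ (by omega)⟩
  obtain ⟨d', hd', hQ', hP'⟩ := hfulfil (hU.2 hUj)
  refine ⟨j - p + d', by simpa [← add_assoc, hloop d' hd'] using hQ', fun e he => ?_⟩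
  rcases lt_or_ge e (j - p) with he' | he'
  · simpa [hstem e (by omega)] using hP e (by omega)
  · obtain ⟨e', rfl⟩ := Nat.exists_eq_add_of_le he'
    simpa [← add_assoc, hloop e' (by omega)] using hP' e' (by omega)

end Lasso

namespace HLTL

variable {T : Set Trace} {A A' : ℕ → Trace} {φ : HLTL} {i j : ℕ}

@[simp] lemma shift_apply (A : ℕ → Trace) (i π n : ℕ) : shift A i π n = A π (n + i) := rfl

lemma shift_shift (A : ℕ → Trace) (i k : ℕ) : shift (shift A i) k = shift A (i + k) := by
  funext π n
  simp only [shift_apply, add_assoc, add_comm k i]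

lemma sat_until_shift_iff (α β : HLTL) (p : ℕ) :
    sat T (.until_ α β) (shift A p) ↔
      UntilAt (fun q => sat T α (shift A q)) (fun q => sat T β (shift A q)) p := by
  simp only [sat, UntilAt, shift_shift]

lemma sat_congr (h : ∀ π ∈ free φ, A π = A' π) : sat T φ A ↔ sat T φ A' := by
  have hshift : ∀ {A A' : ℕ → Trace} {π} (k : ℕ), A π = A' π → shift A k π = shift A' k π :=
    fun k h => funext fun n => congrFun h (n + k)
  have hupdate : ∀ {A A' : ℕ → Trace} {π} (t : Trace) {s : Finset ℕ},
      (∀ π' ∈ s.erase π, A π' = A' π') → ∀ π' ∈ s, update A π t π' = update A' π t π' := by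
    intro A A' π t s h π' hπ'
    rcases eq_or_ne π' π with rfl | hne
    · simp
    · simp [hne, h π' (Finset.mem_erase.2 ⟨hne, hπ'⟩)]
  induction φ generalizing A A' with
  | tt => rfl
  | atom a π => simp [sat, h π (by simp [free])]
  | neg φ ih => exact not_congr (ih h)
  | or φ ψ ih₁ ih₂ =>
    simp only [free, Finset.mem_union] at h
    exact or_congr (ih₁ fun π hπ => h π (.inl hπ)) (ih₂ fun π hπ => h π (.inr hπ))
  | next φ ih => exact ih fun π hπ => hshift 1 (h π hπ)
  | until_ φ ψ ih₁ ih₂ =>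
    simp only [free, Finset.mem_union] at h
    exact exists_congr fun k => and_congr (ih₂ fun π hπ => hshift k (h π (.inr hπ)))
      (forall₂_congr fun l _ => ih₁ fun π hπ => hshift l (h π (.inl hπ)))
  | ex π φ ih => exact exists_congr fun t => and_congr_right fun _ => ih (hupdate t h)
  | all π φ ih => exact forall₂_congr fun t _ => ih (hupdate t h)

lemma sat_iff_of_quantFree {T' : Set Trace} (hφ : quantFree φ) : sat T φ A ↔ sat T' φ A := by
  induction φ generalizing A with
  | tt | atom => rfl
  | neg φ ih => exact not_congr (ih hφ)
  | or φ ψ ih₁ ih₂ =>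
    simp only [quantFree, Bool.and_eq_true] at hφ
    exact or_congr (ih₁ hφ.1) (ih₂ hφ.2)
  | next φ ih => exact ih hφ
  | until_ φ ψ ih₁ ih₂ =>
    simp only [quantFree, Bool.and_eq_true] at hφ
    exact exists_congr fun k => and_congr (ih₂ hφ.2) (forall₂_congr fun l _ => ih₁ hφ.1)
  | ex | all => simp [quantFree] at hφ

def subformulas : HLTL → List HLTL
  | .tt => [.tt]
  | .atom a π => [.atom a π]
  | .neg φ => .neg φ :: subformulas φ
  | .or φ ψ => .or φ ψ :: (subformulas φ ++ subformulas ψ)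
  | .next φ => .next φ :: subformulas φ
  | .until_ φ ψ => .until_ φ ψ :: (subformulas φ ++ subformulas ψ)
  | .ex π φ => .ex π φ :: subformulas φ
  | .all π φ => .all π φ :: subformulas φ

lemma mem_subformulas_self (φ : HLTL) : φ ∈ subformulas φ := by
  cases φ <;> simp [subformulas]

def IsLassoPair (T : Set Trace) (φ : HLTL) (A : ℕ → Trace) (i j : ℕ) : Prop :=
  (∀ χ ∈ subformulas φ, sat T χ (shift A i) ↔ sat T χ (shift A j)) ∧
    ∀ α β, .until_ α β ∈ subformulas φ → sat T (.until_ α β) (shift A i) →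
      ∃ d, i + d < j ∧ sat T β (shift A (i + d)) ∧ ∀ e < d, sat T α (shift A (i + e))

lemma IsLassoPair.mono {ψ : HLTL} (h : IsLassoPair T φ A i j)
    (hsub : subformulas ψ ⊆ subformulas φ) : IsLassoPair T ψ A i j :=
  ⟨fun χ hχ => h.1 χ (hsub hχ), fun α β hαβ => h.2 α β (hsub hαβ)⟩

theorem sat_shift_comp_lasso_iff (hij : i < j) (hφ : quantFree φ) (hA : IsLassoPair T φ A i j)
    (n : ℕ) : sat T φ (shift ((· ∘ lasso i j) ∘ A) n) ↔ sat T φ (shift A (lasso i j n)) := by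
  induction φ generalizing n with
  | tt => rfl
  | atom a π => simp [sat]
  | neg φ ih => exact not_congr (ih hφ (hA.mono (by simp [subformulas])) n)
  | or φ ψ ih₁ ih₂ =>
    simp only [quantFree, Bool.and_eq_true] at hφ
    exact or_congr (ih₁ hφ.1 (hA.mono (by simp [subformulas])) n)
      (ih₂ hφ.2 (hA.mono (by simp [subformulas])) n)
  | next φ ih =>
    simp only [sat, shift_shift]
    rw [ih hφ (hA.mono (by simp [subformulas])) (n + 1)]
    exact lasso_succ_iff hij (fun p => sat T φ (shift A p))
      (hA.1 φ (by simp [subformulas, mem_subformulas_self])) n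
  | until_ α β ihα ihβ =>
    simp only [quantFree, Bool.and_eq_true] at hφ
    have hU := hA.1 _ (List.mem_cons_self ..)
    simp only [sat_until_shift_iff] at hU ⊢
    simp only [ihα hφ.1 (hA.mono (by simp [subformulas])),
      ihβ hφ.2 (hA.mono (by simp [subformulas]))]
    have hfulfil := hA.2 α β (List.mem_cons_self ..)
    simp only [sat_until_shift_iff] at hfulfil
    exact ⟨untilAt_of_untilAt_comp_lasso hij hU, untilAt_comp_lasso_of_untilAt hij hU hfulfil⟩
  | ex | all => simp [quantFree] at hφ

theorem sat_image_comp_lasso (hij : i < j) (hφ : prenex φ)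
    (hT : ∀ A : ℕ → Trace, (∀ π, A π ∈ T) → IsLassoPair T φ A i j) (hA : ∀ π, A π ∈ T)
    (h : sat T φ A) : sat ((· ∘ lasso i j) '' T) φ ((· ∘ lasso i j) ∘ A) := by
  induction φ generalizing A with
  | ex π φ ih =>
    obtain ⟨t, ht, h⟩ := h
    refine ⟨t ∘ lasso i j, Set.mem_image_of_mem _ ht, ?_⟩
    rw [← comp_update]
    exact ih hφ (fun A hA => (hT A hA).mono (by simp [subformulas]))
      ((forall_update_iff A fun _ t => t ∈ T).2 ⟨ht, fun π _ => hA π⟩) h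
  | all π φ ih =>
    rintro _ ⟨t, ht, rfl⟩
    rw [← comp_update]
    exact ih hφ (fun A hA => (hT A hA).mono (by simp [subformulas]))
      ((forall_update_iff A fun _ t => t ∈ T).2 ⟨ht, fun π _ => hA π⟩) (h t ht)
  | _ =>
    have h := (sat_shift_comp_lasso_iff hij hφ (hT A hA) 0).2 (by rwa [lasso_zero])
    exact (sat_iff_of_quantFree hφ).1 h

lemma eventually_until_fulfilled (A : ℕ → Trace) (i : ℕ) (χ : HLTL) :
    ∀ᶠ j in atTop, ∀ α β, χ = .until_ α β → sat T χ (shift A i) →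
      ∃ d, i + d < j ∧ sat T β (shift A (i + d)) ∧ ∀ e < d, sat T α (shift A (i + e)) := by
  by_cases h : ∃ α β, χ = .until_ α β ∧ sat T χ (shift A i)
  · obtain ⟨α, β, rfl, d, hβ, hα⟩ := h
    filter_upwards [eventually_gt_atTop (i + d)] with j hj α' β' heq _
    cases heq
    exact ⟨d, hj, by rwa [shift_shift] at hβ,
      fun e he => by simpa [shift_shift] using hα e he⟩
  · exact .of_forall fun j α β heq hs => (h ⟨α, β, heq, hs⟩).elim

theorem exists_isLassoPair (hT : T.Finite) (ψ : HLTL) :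
    ∃ i j, i < j ∧ ∀ A : ℕ → Trace, (∀ π, A π ∈ T) → IsLassoPair T ψ A i j := by
  let L : Set ℕ := ⋃ χ ∈ {χ | χ ∈ subformulas ψ}, (free χ : Set ℕ)
  have : Finite L :=
    ((List.finite_toSet _).biUnion fun χ _ => (free χ).finite_toSet).to_subtype
  have : Finite T := hT.to_subtype
  have : Finite {χ // χ ∈ subformulas ψ} := (List.finite_toSet _).to_subtype
  let assignment (ρ : L → T) : ℕ → Trace := extend Subtype.val (fun π => (ρ π).1) fun _ _ => ∅
  let table (k : ℕ) (ρ : L → T) (χ : {χ // χ ∈ subformulas ψ}) : Prop :=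
    sat T χ.1 (shift (assignment ρ) k)
  obtain ⟨τ, hτ⟩ := Finite.exists_infinite_fiber table
  have hfreq : ∃ᶠ k in atTop, table k = τ :=
    Nat.frequently_atTop_iff_infinite.2 (Set.infinite_coe_iff.1 hτ)
  obtain ⟨i, hi⟩ := hfreq.exists
  have hfulfil := eventually_all.2 fun ρ : L → T => eventually_all.2
    fun χ : {χ // χ ∈ subformulas ψ} =>
      eventually_until_fulfilled (T := T) (assignment ρ) i χ.1
  obtain ⟨j, hj, hij, hjfulfil⟩ :=
    (hfreq.and_eventually ((eventually_gt_atTop i).and hfulfil)).exists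
  refine ⟨i, j, hij, fun A hA => ?_⟩
  let ρ : L → T := fun π => ⟨A π, hA π⟩
  have hagree : ∀ χ, (free χ : Set ℕ) ⊆ L → ∀ k,
      sat T χ (shift A k) ↔ sat T χ (shift (assignment ρ) k) := fun χ hχ k =>
    sat_congr fun π hπ => funext fun n =>
      congrFun (Subtype.val_injective.extend_apply (fun π : L => (ρ π).1) (fun _ _ => ∅)
        ⟨π, hχ hπ⟩).symm (n + k)
  have hL : ∀ χ ∈ subformulas ψ, (free χ : Set ℕ) ⊆ L := fun χ hχ =>
    Set.subset_biUnion_of_mem (u := fun χ => (free χ : Set ℕ)) hχ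
  refine ⟨fun χ hχ => ?_, fun α β hαβ hs => ?_⟩
  · rw [hagree χ (hL χ hχ), hagree χ (hL χ hχ)]
    exact (congrFun (congrFun (hi.trans hj.symm) ρ) ⟨χ, hχ⟩).to_iff
  · have hαL : (free α : Set ℕ) ⊆ L :=
      (Finset.coe_subset.2 Finset.subset_union_left).trans (hL _ hαβ)
    have hβL : (free β : Set ℕ) ⊆ L :=
      (Finset.coe_subset.2 Finset.subset_union_right).trans (hL _ hαβ)
    obtain ⟨d, hd, hβ, hα⟩ := hjfulfil ρ ⟨_, hαβ⟩ α β rfl ((hagree _ (hL _ hαβ) i).1 hs)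
    exact ⟨d, hd, (hagree β hβL _).2 hβ, fun e he => (hagree α hαL _).2 (hα e he)⟩

end HLTL

/-- A HyperLTL formula is satisfiable by some nonempty trace set of
cardinality at most `m` iff it is satisfiable by a nonempty set of at most
`m` ultimately periodic traces. -/
theorem hyperLTLSat_bounded_iff_ultimately_periodic
    (ψ : HLTL) (hψ : HLTL.Sentence ψ) (m : ℕ) :
    (∃ T : Set Trace, T.Finite ∧ T.ncard ≤ m ∧ HLTL.SatBy T ψ) ↔
      (∃ T : Set Trace, T.Finite ∧ T.ncard ≤ m ∧
        (∀ t ∈ T, UltimatelyPeriodic t) ∧ HLTL.SatBy T ψ) := by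
  refine ⟨?_, fun ⟨T, hfin, hcard, _, hsat⟩ => ⟨T, hfin, hcard, hsat⟩⟩
  rintro ⟨T, hfin, hcard, ⟨t₀, ht₀⟩, hsat⟩
  obtain ⟨i, j, hij, hlasso⟩ := HLTL.exists_isLassoPair hfin ψ
  refine ⟨(· ∘ lasso i j) '' T, hfin.image _, (Set.ncard_image_le hfin).trans hcard,
    ?_, ⟨_, Set.mem_image_of_mem _ ht₀⟩, fun A => ?_⟩
  · rintro _ ⟨t, -, rfl⟩
    exact ultimatelyPeriodic_comp_lasso hij t
  · have h := HLTL.sat_image_comp_lasso hij hψ.1 hlasso (fun _ => ht₀) (hsat _)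
    exact (HLTL.sat_congr (by simp [hψ.2])).1 h
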